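/- Let (X,δ) be a finite metric space, t ≥ 1 a real, H a t-spanner for X, and k ≥ 0 an integer. Let H^(k+1) be the (k+1)-power of H, i.e., the graph on X with an edge between distinct u,v whenever H contains a walk from u to v using at most k+1 edges. Then H^(k+1) is a k-fault-tolerant t-spanner for X. -/

import Mathlib

/-- The weight of a walk in a graph on a metric space: the sum of distances over
its consecutive-vertex pairs. -/
noncomputable def walkWeight {X : Type*} [MetricSpace X] {G : SimpleGraph X} {u v : X}
    (w : G.Walk u v) : ℝ :=
  (w.darts.map fun d => dist d.toProd.1 d.toProd.2).sum

/-- `G` is a `t`-spanner for the metric space `X`. -/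
def IsTSpanner {X : Type*} [MetricSpace X] (G : SimpleGraph X) (t : ℝ) : Prop :=
  ∀ p q : X, ∃ w : G.Walk p q, walkWeight w ≤ t * dist p q

/-- `G` is a `k`-fault-tolerant `t`-spanner for the metric space `X`. -/
def IsFTSpanner {X : Type*} [MetricSpace X] (G : SimpleGraph X) (k : ℕ) (t : ℝ) : Prop :=
  ∀ F : Finset X, F.card ≤ k → ∀ p q : X, p ∉ F → q ∉ F →
    ∃ w : G.Walk p q, (∀ v ∈ w.support, v ∉ F) ∧ walkWeight w ≤ t * dist p q

/-- The total weight of a graph on a finite metric space: the sum of `dist u v`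
over all edges `{u,v}`. -/
noncomputable def graphWeight {X : Type*} [MetricSpace X] [Finite X] (G : SimpleGraph X) : ℝ :=
  ∑ e ∈ (Set.toFinite G.edgeSet).toFinset,
    Sym2.lift ⟨fun a b => dist a b, fun a b => dist_comm a b⟩ e

/-- The minimum spanning tree weight of a finite metric space: the infimum of the
total weight over all connected spanning subgraphs of the complete graph. -/
noncomputable def mstWeight (X : Type*) [MetricSpace X] [Finite X] : ℝ :=
  sInf {w : ℝ | ∃ G : SimpleGraph X, G.Connected ∧ graphWeight G = w}

/-- The degree of a vertex in a graph. -/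
noncomputable def vdeg {X : Type*} (G : SimpleGraph X) (v : X) : ℕ :=
  {u | G.Adj v u}.ncard

/-- A metric space is `2^d`-doubling if every closed ball of radius `2r` can be covered
by at most `2^d` closed balls of radius `r` centered at points of the space. -/
def IsDoubling (X : Type*) [MetricSpace X] (d : ℕ) : Prop :=
  ∀ (x : X) (r : ℝ), 0 < r → ∃ c : Finset X, c.card ≤ 2 ^ d ∧
    Metric.closedBall x (2 * r) ⊆ ⋃ y ∈ c, Metric.closedBall y r

/-- The `s`-power of a graph: an edge between any pair of distinct vertices connected by a
walk with at most `s` edges. -/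
def powerGraph {X : Type*} (G : SimpleGraph X) (s : ℕ) : SimpleGraph X where
  Adj u v := u ≠ v ∧ ∃ w : G.Walk u v, w.length ≤ s
  symm := by
    constructor
    rintro u v ⟨hne, w, hw⟩
    exact ⟨hne.symm, w.reverse, by simpa using hw⟩
  loopless := by
    constructor
    rintro u ⟨hne, -⟩
    exact hne rfl

/-! Follow an `H`-walk from `p` to `q` of weight at most `t·δ(p,q)`, and whenever it leaves a
run of faulty vertices, jump from the last fault-free vertex before the run to the first one
after it. The run has at most `k` distinct vertices, so after removing cycles the stretch
between the two is a walk of at most `k + 1` edges, i.e. an edge of `H^(k+1)`; by the triangle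
inequality the jump is no heavier than the stretch it replaces. -/

open SimpleGraph

namespace SimpleGraph.Walk

variable {V : Type*} {G : SimpleGraph V} {u v : V}

theorem IsPath.length_lt_card_of_support_subset {w : G.Walk u v} (hw : w.IsPath) {s : Finset V}
    (hs : ∀ x ∈ w.support, x ∈ s) : w.length < s.card := by
  classical
  have hcard : w.support.toFinset.card = w.length + 1 := by
    rw [List.toFinset_card_of_nodup hw.support_nodup, length_support]
  have := Finset.card_le_card fun x hx => hs x (List.mem_toFinset.mp hx)
  omega

end SimpleGraph.Walk

section PowerGraph

variable {V : Type*} {G : SimpleGraph V} {k : ℕ} {F : Finset V}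

/-- The bypass of `u` is a path with at most `#F + 2` vertices. -/
theorem powerGraph_adj_of_walk_interior_subset (hF : F.card ≤ k) {p a : V} (hpa : p ≠ a)
    (u : G.Walk p a) (hu : ∀ x ∈ u.support, x ≠ p → x ≠ a → x ∈ F) :
    (powerGraph G (k + 1)).Adj p a := by
  classical
  refine ⟨hpa, u.bypass, ?_⟩
  have hlt := u.bypass_isPath.length_lt_card_of_support_subset (s := insert p (insert a F))
    fun x hx => by
      have := hu x (u.support_bypass_subset_support hx)
      grind
  have := Finset.card_insert_le p (insert a F)
  have := Finset.card_insert_le a F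
  omega

end PowerGraph

section WalkWeight

variable {X : Type*} [MetricSpace X] {G : SimpleGraph X}

@[simp]
theorem walkWeight_nil {u : X} : walkWeight (Walk.nil : G.Walk u u) = 0 := rfl

@[simp]
theorem walkWeight_cons {u v w : X} (h : G.Adj u v) (p : G.Walk v w) :
    walkWeight (Walk.cons h p) = dist u v + walkWeight p := by
  simp [walkWeight]

@[simp]
theorem walkWeight_append {u v w : X} (p : G.Walk u v) (q : G.Walk v w) :
    walkWeight (p.append q) = walkWeight p + walkWeight q := by
  simp [walkWeight, Walk.darts_append]

theorem walkWeight_concat {u v w : X} (p : G.Walk u v) (h : G.Adj v w) :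
    walkWeight (p.concat h) = walkWeight p + dist v w := by
  simp [Walk.concat_eq_append]

theorem walkWeight_nonneg {u v : X} (p : G.Walk u v) : 0 ≤ walkWeight p :=
  List.sum_nonneg <| by simp

theorem dist_le_walkWeight {u v : X} (p : G.Walk u v) : dist u v ≤ walkWeight p := by
  induction p with
  | nil => simp
  | @cons a b c h p ih =>
    rw [walkWeight_cons]
    linarith [dist_triangle a b c]

end WalkWeight

section FaultTolerance

variable {X : Type*} [MetricSpace X] {G : SimpleGraph X} {k : ℕ} {F : Finset X}

theorem exists_powerGraph_walk_of_walk_interior_subset (hF : F.card ≤ k) {p a : X}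
    (u : G.Walk p a) (hu : ∀ x ∈ u.support, x ≠ p → x ≠ a → x ∈ F) :
    ∃ W : (powerGraph G (k + 1)).Walk p a,
      (∀ x ∈ W.support, x = p ∨ x = a) ∧ walkWeight W ≤ walkWeight u := by
  by_cases hpa : p = a
  · subst hpa
    exact ⟨.nil, by simp, by simpa using walkWeight_nonneg u⟩
  · refine ⟨(powerGraph_adj_of_walk_interior_subset hF hpa u hu).toWalk, by simp, ?_⟩
    simpa using dist_le_walkWeight u

/-- The walk `u` is the faulty stretch already traversed since the last fault-free vertex `p`;
it is shortcut as soon as `w` reaches a fault-free vertex. -/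
theorem exists_powerGraph_walk_avoiding (hF : F.card ≤ k) {a q : X} (w : G.Walk a q)
    (hq : q ∉ F) {p : X} (hp : p ∉ F) (u : G.Walk p a)
    (hu : ∀ x ∈ u.support, x ≠ p → x ≠ a → x ∈ F) :
    ∃ W : (powerGraph G (k + 1)).Walk p q,
      (∀ x ∈ W.support, x ∉ F) ∧ walkWeight W ≤ walkWeight u + walkWeight w := by
  induction w generalizing p with
  | nil =>
    obtain ⟨W, hWsupp, hW⟩ := exists_powerGraph_walk_of_walk_interior_subset hF u hu
    refine ⟨W, fun x hx => ?_, by simpa using hW⟩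
    rcases hWsupp x hx with rfl | rfl <;> assumption
  | @cons a b q h rest ih =>
    by_cases ha : a ∈ F
    · obtain ⟨W, hWF, hW⟩ := ih hq hp (u.concat h) fun x hx hxp hxb => by
        rw [Walk.support_concat] at hx
        grind
      refine ⟨W, hWF, ?_⟩
      rw [walkWeight_concat] at hW
      rw [walkWeight_cons]
      linarith
    · obtain ⟨W₁, hW₁supp, hW₁⟩ := exists_powerGraph_walk_of_walk_interior_subset hF u hu
      obtain ⟨W₂, hW₂F, hW₂⟩ := ih hq ha h.toWalk fun x hx hxa hxb => by simp_all
      refine ⟨W₁.append W₂, fun x hx => ?_, ?_⟩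
      · rcases (Walk.mem_support_append_iff _ _).mp hx with hx | hx
        · rcases hW₁supp x hx with rfl | rfl <;> assumption
        · exact hW₂F x hx
      · rw [walkWeight_append, walkWeight_cons]
        simp only [Adj.toWalk, walkWeight_cons, walkWeight_nil] at hW₂
        linarith

end FaultTolerance

theorem power_is_ft_spanner_general {X : Type*} [MetricSpace X]
    (t : ℝ) (H : SimpleGraph X) (hH : IsTSpanner H t) (k : ℕ) :
    IsFTSpanner (powerGraph H (k + 1)) k t := by
  intro F hF p q hp hq
  obtain ⟨w, hw⟩ := hH p q
  obtain ⟨W, hWF, hW⟩ := exists_powerGraph_walk_avoiding hF w hq hp .nil (by simp)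
  exact ⟨W, hWF, le_trans (by simpa using hW) hw⟩

/-- The observation of Levcopoulos, Narasimhan and Smid (restated in Section 1.1 of the
paper): the `(k+1)`-power of a `t`-spanner is a `k`-fault-tolerant `t`-spanner. -/
theorem power_is_ft_spanner {X : Type*} [MetricSpace X]
    (t : ℝ) (ht : 1 ≤ t) (H : SimpleGraph X) (hH : IsTSpanner H t) (k : ℕ) :
    IsFTSpanner (powerGraph H (k + 1)) k t :=
  power_is_ft_spanner_general t H hH k
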